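/- arXiv:1910.06785 — 5 statements merged into one kernel-verified Lean document; each statement's English description precedes it below -/
import Mathlib

section
/- (Space rotation between private spaces.) Let E be a real inner product space, M = ℝ × E with Minkowski form B. Let v ∈ E with ‖v‖ < 1 and δ = √(1 − ‖v‖²). For a ∈ E define ξ_v(a) = ( ⟪v,a⟫/δ , a + (⟪v,a⟫/(δ(δ+1))) • v ) ∈ M. Then: (a) B(ξ_v(a), (1, v)) = 0, i.e. ξ_v(a) lies in the private space of the moving observer; (b) B(ξ_v(a), ξ_v(a)) = −‖a‖², i.e. ξ_v preserves the Minkowski square-norm of space-like vectors (0,a). -/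
open RealInnerProductSpace

variable {E : Type*} [NormedAddCommGroup E] [InnerProductSpace ℝ E]

/-- The Minkowski bilinear form on `ℝ × E`. -/
noncomputable def minkB (A C : ℝ × E) : ℝ := A.1 * C.1 - ⟪A.2, C.2⟫

/-- The rotation of the private space of `T = (1,0)` to the private space of the
observer moving with velocity `v`; here `δ = √(1 - ‖v‖²)`. -/
noncomputable def xiMap (v : E) (a : E) : ℝ × E :=
  (⟪v, a⟫ / Real.sqrt (1 - ‖v‖ ^ 2),
    a + (⟪v, a⟫ / (Real.sqrt (1 - ‖v‖ ^ 2) * (Real.sqrt (1 - ‖v‖ ^ 2) + 1))) • v)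

/-- Space rotation between private spaces: `ξ_v a` lies in the private space of the
moving observer and has the same Minkowski square-norm as the space-like vector `(0, a)`. -/
theorem xiMap_mem_private_space_and_isometric (v : E) (hv : ‖v‖ < 1) (a : E) :
    minkB (xiMap v a) (((1 : ℝ), v) : ℝ × E) = 0 ∧
      minkB (xiMap v a) (xiMap v a) = -‖a‖ ^ 2 := by
  have h1 : (0:ℝ) < 1 - ‖v‖ ^ 2 := by nlinarith [norm_nonneg v]
  set δ := Real.sqrt (1 - ‖v‖ ^ 2) with hδ
  have hδpos : 0 < δ := Real.sqrt_pos.mpr h1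
  have hδ2 : δ ^ 2 = 1 - ‖v‖ ^ 2 := Real.sq_sqrt h1.le
  have hδ1 : 0 < δ + 1 := by linarith
  set c := ⟪v, a⟫ with hc
  have hva : ⟪a, v⟫ = c := (real_inner_comm a v).symm
  have hvv : ⟪v, v⟫ = ‖v‖ ^ 2 := real_inner_self_eq_norm_sq v
  have haa : ⟪a, a⟫ = ‖a‖ ^ 2 := real_inner_self_eq_norm_sq a
  constructor
  · simp only [minkB, xiMap, inner_add_left, real_inner_smul_left, hva, hvv, ← hδ, ← hc]
    have hv2 : ‖v‖ ^ 2 = 1 - δ ^ 2 := by linarith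
    rw [hv2]; field_simp; ring
  · simp only [minkB, xiMap, inner_add_left, inner_add_right, real_inner_smul_left,
      real_inner_smul_right, hva, hvv, haa, ← hδ, ← hc]
    have hv2 : ‖v‖ ^ 2 = 1 - δ ^ 2 := by linarith
    rw [hv2]; field_simp; ring
end

section
/- (Explicit Møller addition formula.) Let E be a real inner product space, M = ℝ × E with Minkowski form B and chronor T = (1,0). Let u, v ∈ E with ‖v‖ < 1, δ = √(1 − ‖v‖²), and 1 + ⟪v,u⟫ ≠ 0. With ξ_v(u) = ( ⟪v,u⟫/δ , u + (⟪v,u⟫/(δ(δ+1))) • v ), one has π_T( δ⁻¹ • (1, v) + ξ_v(u) ) = ( 0 , (1 + ⟪v,u⟫)⁻¹ • ( (1 + ⟪v,u⟫/(1+δ)) • v + δ • u ) ). -/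
/-!
The event `δ⁻¹ • (1, v) + ξ_v(u)` has time coordinate `(1 + ⟪v, u⟫) / δ`, which is nonzero, so its
pseudo-projection is the spatial part rescaled by `δ / (1 + ⟪v, u⟫)`; the formula is then the scalar
identity `δ * (δ⁻¹ + c / (δ (δ + 1))) = 1 + c / (1 + δ)` for `c = ⟪v, u⟫`.
-/

open RealInnerProductSpace

variable {E : Type*} [NormedAddCommGroup E] [InnerProductSpace ℝ E]

/-- The chronor `T = (1, 0)`. -/
noncomputable def chronor : ℝ × E := (1, 0)

/-- The pseudo-projection along the chronor `T`. -/
noncomputable def pseudoProj (A : ℝ × E) : ℝ × E :=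
  (minkB A (chronor : ℝ × E))⁻¹ • A - chronor

lemma minkB_chronor (A : ℝ × E) : minkB A chronor = A.1 := by
  simp [minkB, chronor]

lemma pseudoProj_of_fst_ne_zero {A : ℝ × E} (hA : A.1 ≠ 0) :
    pseudoProj A = (0, A.1⁻¹ • A.2) := by
  rw [pseudoProj, minkB_chronor]
  ext <;> simp [chronor, hA]

lemma xiMap_fst (v a : E) : (xiMap v a).1 = ⟪v, a⟫ / √(1 - ‖v‖ ^ 2) := rfl

lemma xiMap_snd (v a : E) :
    (xiMap v a).2 = a + (⟪v, a⟫ / (√(1 - ‖v‖ ^ 2) * (√(1 - ‖v‖ ^ 2) + 1))) • v := rfl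

/-- Explicit Møller addition formula. -/
theorem moller_addition_explicit (u v : E) (hv : ‖v‖ < 1)
    (huv : 1 + ⟪v, u⟫ ≠ 0) :
    pseudoProj ((Real.sqrt (1 - ‖v‖ ^ 2))⁻¹ • (((1 : ℝ), v) : ℝ × E) + xiMap v u) =
      ((0 : ℝ),
        (1 + ⟪v, u⟫)⁻¹ •
          ((1 + ⟪v, u⟫ / (1 + Real.sqrt (1 - ‖v‖ ^ 2))) • v +
            Real.sqrt (1 - ‖v‖ ^ 2) • u)) := by
  have hδ : 0 < √(1 - ‖v‖ ^ 2) := Real.sqrt_pos.mpr (by nlinarith [norm_nonneg v])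
  set δ := √(1 - ‖v‖ ^ 2)
  set A := δ⁻¹ • ((1 : ℝ), v) + xiMap v u
  have hA₁ : A.1 = (1 + ⟪v, u⟫) / δ := by
    simp only [A, Prod.fst_add, Prod.smul_fst, xiMap_fst, smul_eq_mul, mul_one]
    ring
  have hA₂ : A.2 = u + (δ⁻¹ + ⟪v, u⟫ / (δ * (δ + 1))) • v := by
    simp only [A, Prod.snd_add, Prod.smul_snd, xiMap_snd, add_smul]
    abel
  rw [pseudoProj_of_fst_ne_zero (hA₁ ▸ div_ne_zero huv hδ.ne'), hA₁, hA₂]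
  congr 1
  match_scalars <;> field_simp; ring
end

section
/- (Closure of the Møller loop.) Let E be a real inner product space and u, v ∈ E with ‖v‖ < 1 and ‖u‖ < 1. Then 1 + ⟪v,u⟫ > 0, and with δ = √(1 − ‖v‖²) the Møller sum satisfies 1 − ‖v ⊕ u‖² = (1 − ‖v‖²)(1 − ‖u‖²)/(1 + ⟪v,u⟫)²; in particular ‖v ⊕ u‖ < 1. -/
open RealInnerProductSpace

variable {E : Type*} [NormedAddCommGroup E] [InnerProductSpace ℝ E]

/-- The Møller addition of velocities; `δ = √(1 - ‖v‖²)`. -/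
noncomputable def moller (v u : E) : E :=
  (1 + ⟪v, u⟫)⁻¹ •
    ((1 + ⟪v, u⟫ / (1 + Real.sqrt (1 - ‖v‖ ^ 2))) • v + Real.sqrt (1 - ‖v‖ ^ 2) • u)

/-- Closure of the Møller loop: the sum of two subluminal velocities is subluminal,
with an explicit formula for `1 - ‖v ⊕ u‖²`. -/
theorem moller_closure (u v : E) (hv : ‖v‖ < 1) (hu : ‖u‖ < 1) :
    0 < 1 + ⟪v, u⟫ ∧
      1 - ‖moller v u‖ ^ 2 =
        (1 - ‖v‖ ^ 2) * (1 - ‖u‖ ^ 2) / (1 + ⟪v, u⟫) ^ 2 ∧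
      ‖moller v u‖ < 1 := by
  set c : ℝ := ⟪v, u⟫ with hc
  have habs : |c| ≤ ‖v‖ * ‖u‖ := abs_real_inner_le_norm v u
  have hvn : 0 ≤ ‖v‖ := norm_nonneg v
  have hun : 0 ≤ ‖u‖ := norm_nonneg u
  have habs' := abs_le.mp habs
  have hpos : 0 < 1 + c := by nlinarith [habs'.1]
  set δ : ℝ := Real.sqrt (1 - ‖v‖ ^ 2) with hδ
  have hδnn : 0 ≤ δ := Real.sqrt_nonneg _
  have hδsq : δ ^ 2 = 1 - ‖v‖ ^ 2 := Real.sq_sqrt (by nlinarith)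
  have hδ1 : 0 < 1 + δ := by linarith
  set a : ℝ := 1 + c / (1 + δ) with ha
  have hkey : ‖a • v + δ • u‖ ^ 2 = a ^ 2 * ‖v‖ ^ 2 + 2 * (a * δ * c) + δ ^ 2 * ‖u‖ ^ 2 := by
    rw [norm_add_sq_real, real_inner_smul_left, real_inner_smul_right,
      norm_smul, norm_smul, mul_pow, mul_pow, Real.norm_eq_abs, Real.norm_eq_abs,
      sq_abs, sq_abs, ← hc]
    ring
  have hm : ‖moller v u‖ ^ 2 = (1 + c)⁻¹ ^ 2 * ‖a • v + δ • u‖ ^ 2 := by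
    rw [moller, norm_smul, mul_pow, Real.norm_eq_abs, sq_abs]
  have hmain : 1 - ‖moller v u‖ ^ 2 = (1 - ‖v‖ ^ 2) * (1 - ‖u‖ ^ 2) / (1 + c) ^ 2 := by
    have hv2 : ‖v‖ ^ 2 = 1 - δ ^ 2 := by linarith
    rw [hm, hkey, hv2, ha]
    have h1 : (1 + δ) ≠ 0 := ne_of_gt hδ1
    have h2 : (1 + c) ≠ 0 := ne_of_gt hpos
    field_simp
    ring
  refine ⟨hpos, hmain, ?_⟩
  have hrpos : 0 < (1 - ‖v‖ ^ 2) * (1 - ‖u‖ ^ 2) / (1 + c) ^ 2 := by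
    exact div_pos (mul_pos (by nlinarith) (by nlinarith)) (by positivity)
  nlinarith [norm_nonneg (moller v u), hmain]
end

section
/- (Reciprocal velocity.) Let E be a real inner product space, M = ℝ × E with Minkowski form B and chronor T = (1,0). Let v ∈ E with ‖v‖ < 1, δ = √(1 − ‖v‖²), and T₂ = δ⁻¹ • (1, v). Then the velocity of observer T as measured by observer T₂ is π_{T₂}(T) = δ⁻¹ • ( −‖v‖² , −v ), and its Minkowski square-norm is B(π_{T₂}(T), π_{T₂}(T)) = −‖v‖²; in particular the reciprocal speeds are equal. -/
open RealInnerProductSpace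

variable {E : Type*} [NormedAddCommGroup E] [InnerProductSpace ℝ E]

/-- Pseudo-projection along an arbitrary chronor `T'`. -/
noncomputable def pseudoProjAlong (T' A : ℝ × E) : ℝ × E :=
  (minkB A T')⁻¹ • A - T'

/-! The proof is a direct computation: `B(T, T₂)` is the time component `δ⁻¹` of `T₂`, so
`π_{T₂}(T) = δ • T - T₂ = δ⁻¹ • (δ² - 1, -v)`, and `δ² - 1 = -‖v‖²`. Its Minkowski square is
`δ⁻² (‖v‖⁴ - ‖v‖²) = -‖v‖² (1 - ‖v‖²) / δ² = -‖v‖²`. -/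

theorem minkB_smul_smul (a b : ℝ) (A C : ℝ × E) :
    minkB (a • A) (b • C) = a * b * minkB A C := by
  simp only [minkB, Prod.smul_fst, Prod.smul_snd, smul_eq_mul, real_inner_smul_left,
    real_inner_smul_right]
  ring

theorem minkB_self_mk (t : ℝ) (x : E) : minkB (t, x) (t, x) = t ^ 2 - ‖x‖ ^ 2 := by
  simp only [minkB, real_inner_self_eq_norm_sq]
  ring

theorem minkB_chronor_left (A : ℝ × E) : minkB chronor A = A.1 := by
  simp [minkB, chronor]

theorem pseudoProjAlong_chronor (T' : ℝ × E) :
    pseudoProjAlong T' chronor = (T'.1⁻¹ - T'.1, -T'.2) := by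
  rw [pseudoProjAlong, minkB_chronor_left]
  ext <;> simp [chronor]

theorem pseudoProjAlong_smul_mk_chronor {δ : ℝ} {v : E} (hδ₀ : δ ≠ 0)
    (hδ : δ ^ 2 = 1 - ‖v‖ ^ 2) :
    pseudoProjAlong (δ⁻¹ • ((1 : ℝ), v)) chronor = δ⁻¹ • ((-‖v‖ ^ 2, -v) : ℝ × E) := by
  rw [pseudoProjAlong_chronor]
  ext
  · simp only [Prod.smul_fst, smul_eq_mul, mul_one, inv_inv]
    field_simp
    linear_combination hδ
  · simp

theorem minkB_self_smul_mk_neg {δ : ℝ} {v : E} (hδ₀ : δ ≠ 0) (hδ : δ ^ 2 = 1 - ‖v‖ ^ 2) :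
    minkB (δ⁻¹ • ((-‖v‖ ^ 2, -v) : ℝ × E)) (δ⁻¹ • (-‖v‖ ^ 2, -v)) = -‖v‖ ^ 2 := by
  rw [minkB_smul_smul, minkB_self_mk, norm_neg]
  field_simp
  linear_combination ‖v‖ ^ 2 * hδ

/-- Reciprocal velocity: the velocity of the observer `T` as measured by the
moving observer `T₂ = δ⁻¹ • (1, v)`, and equality of reciprocal speeds. -/
theorem reciprocal_velocity (v : E) (hv : ‖v‖ < 1) :
    pseudoProjAlong ((Real.sqrt (1 - ‖v‖ ^ 2))⁻¹ • (((1 : ℝ), v) : ℝ × E))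
        (chronor : ℝ × E) =
      (Real.sqrt (1 - ‖v‖ ^ 2))⁻¹ • ((-‖v‖ ^ 2, -v) : ℝ × E) ∧
    minkB
        (pseudoProjAlong ((Real.sqrt (1 - ‖v‖ ^ 2))⁻¹ • (((1 : ℝ), v) : ℝ × E))
          (chronor : ℝ × E))
        (pseudoProjAlong ((Real.sqrt (1 - ‖v‖ ^ 2))⁻¹ • (((1 : ℝ), v) : ℝ × E))
          (chronor : ℝ × E)) = -‖v‖ ^ 2 := by
  have hpos : 0 < 1 - ‖v‖ ^ 2 := by nlinarith [norm_nonneg v]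
  have hδ₀ : Real.sqrt (1 - ‖v‖ ^ 2) ≠ 0 := (Real.sqrt_pos.mpr hpos).ne'
  have hδ : Real.sqrt (1 - ‖v‖ ^ 2) ^ 2 = 1 - ‖v‖ ^ 2 := Real.sq_sqrt hpos.le
  rw [pseudoProjAlong_smul_mk_chronor hδ₀ hδ]
  exact ⟨rfl, minkB_self_smul_mk_neg hδ₀ hδ⟩
end

section
/- (Sum of reciprocal velocities.) Let E be a real inner product space, M = ℝ × E with Minkowski form B and chronor T = (1,0). Let v ∈ E with ‖v‖ < 1, δ = √(1 − ‖v‖²), and T₂ = δ⁻¹ • (1, v). Then the two mutual velocities satisfy (0, v) + π_{T₂}(T) = (δ − 1) • (T + T₂); in particular v₀₁ + v₁₀ is proportional to T₀ + T₁ and, for v ≠ 0, v₀₁ + v₁₀ ≠ 0. -/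
open RealInnerProductSpace

variable {E : Type*} [NormedAddCommGroup E] [InnerProductSpace ℝ E]

/-- The sum of the two mutual velocities `v₀₁ = (0, v)` and `v₁₀ = π_{T₂}(T)` is
proportional to `T + T₂`; in particular it is nonzero when `v ≠ 0`. -/
theorem sum_of_reciprocal_velocities (v : E) (hv : ‖v‖ < 1) :
    (((0 : ℝ), v) : ℝ × E) +
        pseudoProjAlong ((Real.sqrt (1 - ‖v‖ ^ 2))⁻¹ • (((1 : ℝ), v) : ℝ × E))
          (chronor : ℝ × E) =
      (Real.sqrt (1 - ‖v‖ ^ 2) - 1) •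
        ((chronor : ℝ × E) + (Real.sqrt (1 - ‖v‖ ^ 2))⁻¹ • (((1 : ℝ), v) : ℝ × E)) ∧
    (v ≠ 0 →
      (((0 : ℝ), v) : ℝ × E) +
          pseudoProjAlong ((Real.sqrt (1 - ‖v‖ ^ 2))⁻¹ • (((1 : ℝ), v) : ℝ × E))
            (chronor : ℝ × E) ≠ 0) := by
  set δ := Real.sqrt (1 - ‖v‖ ^ 2) with hδdef
  have h1 : (0 : ℝ) < 1 - ‖v‖ ^ 2 := by nlinarith [norm_nonneg v]
  have hδpos : 0 < δ := Real.sqrt_pos.mpr h1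
  have hδne : δ ≠ 0 := ne_of_gt hδpos
  have hB : minkB (chronor : ℝ × E) (δ⁻¹ • (((1 : ℝ), v) : ℝ × E)) = δ⁻¹ := by
    simp [minkB, chronor, Prod.smul_def]
  have hmain :
      (((0 : ℝ), v) : ℝ × E) +
          pseudoProjAlong (δ⁻¹ • (((1 : ℝ), v) : ℝ × E)) (chronor : ℝ × E) =
        (δ - 1) • ((chronor : ℝ × E) + δ⁻¹ • (((1 : ℝ), v) : ℝ × E)) := by
    rw [pseudoProjAlong, hB, inv_inv]
    apply Prod.ext
    · simp [chronor, Prod.smul_def]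
      field_simp
      ring
    · simp [chronor, Prod.smul_def, smul_smul]
      have h : (δ - 1) * δ⁻¹ = 1 - δ⁻¹ := by field_simp
      rw [h, sub_smul, one_smul, sub_eq_add_neg]
  refine ⟨hmain, fun hv0 h0 => ?_⟩
  rw [hmain] at h0
  have h2 : ((δ - 1) * δ⁻¹) • v = 0 := by
    have := congrArg Prod.snd h0
    simpa [chronor, Prod.smul_def, smul_smul] using this
  have hδsq : δ ^ 2 = 1 - ‖v‖ ^ 2 := Real.sq_sqrt h1.le
  have hvpos : 0 < ‖v‖ ^ 2 := by
    have := norm_pos_iff.mpr hv0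
    positivity
  rcases smul_eq_zero.mp h2 with h | h
  · have : δ - 1 ≠ 0 := by intro hc; nlinarith
    exact this (by
      rcases mul_eq_zero.mp h with h' | h'
      · exact h'
      · exact absurd h' (inv_ne_zero hδne))
  · exact hv0 h
end
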